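/- arXiv:2503.03055 — 3 statements merged into one kernel-verified Lean document; each statement's English description precedes it below -/
import Mathlib

section
/- Let G_1 be a connected simple graph with n_1 vertices and m_1 edges and G_2 a connected simple graph with n_2 vertices and m_2 edges, on disjoint vertex sets, each of diameter at least 2. Then the Hosoya polynomial of the Mycielskian of the join is H(μ(G_1 ⊕ G_2), x) = (3m_1 + 3m_2 + 3n_1 n_2 + n_1 + n_2)x + (2n_1² + 2n_2² + n_1 n_2 − 3m_1 − 3m_2)x². -/
open SimpleGraph Polynomial Finset

/-- The Mycielskian `μ(G)` of a simple graph `G`. Vertices `Sum.inl v` are the original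
vertices `v_i`, vertices `Sum.inr (Sum.inl v)` are the shadow vertices `u_i`, and
`Sum.inr (Sum.inr ())` is the apex vertex `w`.  Edges: the edges of `G`, the edges `w u_i`,
and the edges `u_i v_j`, `u_j v_i` for every edge `v_i v_j` of `G`. -/
def mycielskian {V : Type*} (G : SimpleGraph V) : SimpleGraph (V ⊕ V ⊕ Unit) :=
  SimpleGraph.fromRel (fun a b =>
    match a, b with
    | Sum.inl a, Sum.inl b => G.Adj a b
    | Sum.inl a, Sum.inr (Sum.inl b) => G.Adj a b
    | Sum.inr (Sum.inl _), Sum.inr (Sum.inr _) => True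
    | _, _ => False)

/-- `distCount G k` is `d(G,k)`, the number of unordered pairs of distinct vertices of `G`
whose graph distance is exactly `k`. -/
noncomputable def distCount {V : Type*} (G : SimpleGraph V) (k : ℕ) : ℕ :=
  Nat.card {e : Sym2 V // ¬ e.IsDiag ∧ Sym2.lift ⟨G.dist, fun _ _ => G.dist_comm⟩ e = k}

/-- The Hosoya polynomial `H(G,x) = Σ_{k=1}^{D(G)} d(G,k) x^k` (with rational coefficients). -/
noncomputable def hosoya {V : Type*} (G : SimpleGraph V) : Polynomial ℚ :=
  ∑ k ∈ Finset.Icc 1 G.diam, (distCount G k : ℚ) • Polynomial.X ^ k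

/-- The Wiener index `W(G)`: the sum of distances over all unordered pairs of distinct
vertices (the diagonal contributes `0`, so we may sum over ordered pairs and halve). -/
noncomputable def wiener {V : Type*} (G : SimpleGraph V) [Fintype V] : ℚ :=
  (∑ u : V, ∑ v : V, (G.dist u v : ℚ)) / 2

/-- The Hyper-Wiener index `WW(G) = (1/2) Σ_{{u,v}} (d(u,v)² + d(u,v))`. -/
noncomputable def hyperWiener {V : Type*} (G : SimpleGraph V) [Fintype V] : ℚ :=
  (∑ u : V, ∑ v : V, ((G.dist u v : ℚ) ^ 2 + (G.dist u v : ℚ))) / 4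

/-- The TSZ index `TSZ(G) = (1/6) Σ_{{u,v}} d³ + (1/2) Σ_{{u,v}} d² + (1/3) Σ_{{u,v}} d`. -/
noncomputable def tszIndex {V : Type*} (G : SimpleGraph V) [Fintype V] : ℚ :=
  (∑ u : V, ∑ v : V, (G.dist u v : ℚ) ^ 3) / 12
    + (∑ u : V, ∑ v : V, (G.dist u v : ℚ) ^ 2) / 4
    + (∑ u : V, ∑ v : V, (G.dist u v : ℚ)) / 6

/-- The Harary index `Har(G) = Σ_{{u,v}} 1/d(u,v)` (diagonal terms are `0⁻¹ = 0`). -/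
noncomputable def harary {V : Type*} (G : SimpleGraph V) [Fintype V] : ℚ :=
  (∑ u : V, ∑ v : V, ((G.dist u v : ℚ))⁻¹) / 2

/-- The closeness `C(G) = Σ_u Σ_{v ≠ u} 2^{-d(u,v)}` over ordered pairs of distinct vertices. -/
noncomputable def closeness {V : Type*} (G : SimpleGraph V) [Fintype V] : ℚ :=
  letI := Classical.decEq V
  ∑ u : V, ∑ v : V, if v = u then 0 else ((1 : ℚ) / 2) ^ (G.dist u v)

/-- `σ_{uv}`: the number of shortest paths (walks of length `dist u v`) from `u` to `v`. -/
noncomputable def numSP {V : Type*} (G : SimpleGraph V) (u v : V) : ℕ :=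
  Nat.card {p : G.Walk u v // p.length = G.dist u v}

/-- `σ_{uv}(w)`: the number of shortest paths from `u` to `v` passing through `w`. -/
noncomputable def numSPthrough {V : Type*} (G : SimpleGraph V) (w u v : V) : ℕ :=
  Nat.card {p : G.Walk u v // p.length = G.dist u v ∧ w ∈ p.support}

/-- The betweenness centrality `B_w = Σ_{{u,v}, u ≠ w ≠ v} σ_{uv}(w)/σ_{uv}` of a vertex `w`,
summed over unordered pairs of distinct vertices (ordered pairs, halved). -/
noncomputable def btwVertex {V : Type*} (G : SimpleGraph V) [Fintype V] (w : V) : ℚ :=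
  letI := Classical.decEq V
  (∑ u : V, ∑ v : V,
    if u ≠ v ∧ u ≠ w ∧ v ≠ w then (numSPthrough G w u v : ℚ) / (numSP G u v) else 0) / 2

/-- The betweenness centrality of a graph: `B⁻(G) = (1/N) Σ_w B_w`. -/
noncomputable def btw {V : Type*} (G : SimpleGraph V) [Fintype V] : ℚ :=
  (∑ w : V, btwVertex G w) / (Fintype.card V)

/-- The star graph `S_n`: center `0` joined to the `n` leaves `1, …, n`. -/
def starGraph (n : ℕ) : SimpleGraph (Fin (n + 1)) :=
  SimpleGraph.fromRel (fun a _ => a = 0)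

/-- The join `G₁ ⊕ G₂` of two graphs on disjoint vertex sets: all edges of `G₁`, all edges
of `G₂`, and all edges between `V(G₁)` and `V(G₂)`. -/
def joinGraph {V₁ V₂ : Type*} (G₁ : SimpleGraph V₁) (G₂ : SimpleGraph V₂) :
    SimpleGraph (V₁ ⊕ V₂) :=
  SimpleGraph.fromRel (fun a b =>
    match a, b with
    | Sum.inl a, Sum.inl b => G₁.Adj a b
    | Sum.inr a, Sum.inr b => G₂.Adj a b
    | Sum.inl _, Sum.inr _ => True
    | _, _ => False)

section AuxSG
variable {V₁ V₂ V : Type*} (G₁ : SimpleGraph V₁) (G₂ : SimpleGraph V₂) (G : SimpleGraph V)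

lemma join_adj_ll (a b : V₁) : (joinGraph G₁ G₂).Adj (.inl a) (.inl b) ↔ G₁.Adj a b := by
  constructor
  · rintro ⟨h1, h2 | h2⟩ <;> first | exact h2 | exact h2.symm
  · exact fun h => ⟨by simpa using h.ne, Or.inl h⟩

lemma join_adj_rr (a b : V₂) : (joinGraph G₁ G₂).Adj (.inr a) (.inr b) ↔ G₂.Adj a b := by
  constructor
  · rintro ⟨h1, h2 | h2⟩ <;> first | exact h2 | exact h2.symm
  · exact fun h => ⟨by simpa using h.ne, Or.inl h⟩

lemma join_adj_lr (a : V₁) (b : V₂) : (joinGraph G₁ G₂).Adj (.inl a) (.inr b) :=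
  ⟨by simp, Or.inl trivial⟩

lemma myc_adj_ll (a b : V) : (mycielskian G).Adj (.inl a) (.inl b) ↔ G.Adj a b := by
  constructor
  · rintro ⟨h1, h2 | h2⟩ <;> first | exact h2 | exact h2.symm
  · exact fun h => ⟨by simpa using h.ne, Or.inl h⟩

lemma myc_adj_lu (a b : V) : (mycielskian G).Adj (.inl a) (.inr (.inl b)) ↔ G.Adj a b := by
  constructor
  · rintro ⟨h1, h2 | h2⟩
    · exact h2
    · exact absurd h2 (by simp)
  · exact fun h => ⟨by simp, Or.inl h⟩

lemma myc_adj_uu (a b : V) : ¬ (mycielskian G).Adj (.inr (.inl a)) (.inr (.inl b)) := by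
  rintro ⟨h1, h2 | h2⟩ <;> simp_all

lemma myc_adj_uw (a : V) (u : Unit) : (mycielskian G).Adj (.inr (.inl a)) (.inr (.inr u)) :=
  ⟨by simp, Or.inl trivial⟩

lemma myc_adj_lw (a : V) (u : Unit) : ¬ (mycielskian G).Adj (.inl a) (.inr (.inr u)) := by
  rintro ⟨h1, h2 | h2⟩ <;> simp_all

-- every vertex of the join has a neighbor (given both sides nonempty)
lemma join_exists_nbr [Nonempty V₁] [Nonempty V₂] (a : V₁ ⊕ V₂) :
    ∃ c, (joinGraph G₁ G₂).Adj a c := by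
  cases a with
  | inl a => exact ⟨.inr (Classical.arbitrary V₂), join_adj_lr _ _ _ _⟩
  | inr a => exact ⟨.inl (Classical.arbitrary V₁), (join_adj_lr _ _ _ _).symm⟩

-- nonadjacent (or equal) vertices of the join have a common neighbor
lemma join_common_nbr [Nonempty V₁] [Nonempty V₂] (a b : V₁ ⊕ V₂)
    (h : ¬ (joinGraph G₁ G₂).Adj a b) :
    ∃ c, (joinGraph G₁ G₂).Adj a c ∧ (joinGraph G₁ G₂).Adj b c := by
  cases a with
  | inl a =>
    cases b with
    | inl b => exact ⟨.inr (Classical.arbitrary V₂), join_adj_lr _ _ _ _, join_adj_lr _ _ _ _⟩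
    | inr b => exact absurd (join_adj_lr _ _ a b) h
  | inr a =>
    cases b with
    | inl b => exact absurd (join_adj_lr _ _ b a).symm h
    | inr b =>
      exact ⟨.inl (Classical.arbitrary V₁), (join_adj_lr _ _ _ _).symm, (join_adj_lr _ _ _ _).symm⟩

-- main structural lemma: in μ(join), nonadjacent distinct vertices have a common neighbor
lemma myc_join_common_nbr [Nonempty V₁] [Nonempty V₂]
    (x y : (V₁ ⊕ V₂) ⊕ (V₁ ⊕ V₂) ⊕ Unit) (hne : x ≠ y)
    (h : ¬ (mycielskian (joinGraph G₁ G₂)).Adj x y) :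
    ∃ z, (mycielskian (joinGraph G₁ G₂)).Adj x z ∧ (mycielskian (joinGraph G₁ G₂)).Adj z y := by
  set J := joinGraph G₁ G₂ with hJ
  obtain x | x | x := x <;> obtain y | y | y := y
  · -- v v
    rw [myc_adj_ll] at h
    obtain ⟨c, h1, h2⟩ := join_common_nbr G₁ G₂ x y h
    exact ⟨.inl c, (myc_adj_ll _ _ _).mpr h1, (myc_adj_ll _ _ _).mpr h2.symm⟩
  · -- v u
    rw [myc_adj_lu] at h
    obtain ⟨c, h1, h2⟩ := join_common_nbr G₁ G₂ x y h
    exact ⟨.inl c, (myc_adj_ll _ _ _).mpr h1, (myc_adj_lu _ _ _).mpr h2.symm⟩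
  · -- v w
    obtain ⟨c, h1⟩ := join_exists_nbr G₁ G₂ x
    exact ⟨.inr (.inl c), (myc_adj_lu _ _ _).mpr h1, myc_adj_uw _ _ _⟩
  · -- u v
    rw [show (mycielskian J).Adj (.inr (.inl x)) (.inl y) ↔ J.Adj y x from
      ⟨fun h' => (myc_adj_lu J y x).mp h'.symm, fun h' => ((myc_adj_lu J y x).mpr h').symm⟩] at h
    obtain ⟨c, h1, h2⟩ := join_common_nbr G₁ G₂ y x (fun h' => h h')
    exact ⟨.inl c, ((myc_adj_lu _ _ _).mpr h2.symm).symm, (myc_adj_ll _ _ _).mpr h1.symm⟩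
  · -- u u
    exact ⟨.inr (.inr ()), myc_adj_uw _ _ _, (myc_adj_uw _ _ _).symm⟩
  · -- u w
    exact absurd (myc_adj_uw J x y) h
  · -- w v
    obtain ⟨c, h1⟩ := join_exists_nbr G₁ G₂ y
    exact ⟨.inr (.inl c), (myc_adj_uw _ _ _).symm, ((myc_adj_lu _ _ _).mpr h1).symm⟩
  · -- w u
    exact absurd (myc_adj_uw J y x).symm h
  · -- w w
    exact absurd (Subsingleton.elim x y ▸ rfl : (Sum.inr (Sum.inr x) : (V₁ ⊕ V₂) ⊕ (V₁ ⊕ V₂) ⊕ Unit) = Sum.inr (Sum.inr y)) hne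

lemma myc_join_dist_le_two [Nonempty V₁] [Nonempty V₂]
    (x y : (V₁ ⊕ V₂) ⊕ (V₁ ⊕ V₂) ⊕ Unit) :
    (mycielskian (joinGraph G₁ G₂)).edist x y ≤ 2 := by
  rcases eq_or_ne x y with rfl | hne
  · simp
  by_cases h : (mycielskian (joinGraph G₁ G₂)).Adj x y
  · calc (mycielskian (joinGraph G₁ G₂)).edist x y ≤ 1 := by
          exact le_of_eq (edist_eq_one_iff_adj.mpr h)
      _ ≤ 2 := by norm_num
  · obtain ⟨z, h1, h2⟩ := myc_join_common_nbr G₁ G₂ x y hne h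
    calc (mycielskian (joinGraph G₁ G₂)).edist x y
        ≤ (Walk.cons h1 (Walk.cons h2 Walk.nil)).length := Walk.edist_le _
      _ = 2 := by simp

lemma myc_join_dist_cases [Nonempty V₁] [Nonempty V₂]
    (x y : (V₁ ⊕ V₂) ⊕ (V₁ ⊕ V₂) ⊕ Unit) (hne : x ≠ y) :
    ((mycielskian (joinGraph G₁ G₂)).Adj x y ∧ (mycielskian (joinGraph G₁ G₂)).dist x y = 1)
    ∨ (¬ (mycielskian (joinGraph G₁ G₂)).Adj x y
        ∧ (mycielskian (joinGraph G₁ G₂)).dist x y = 2) := by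
  by_cases h : (mycielskian (joinGraph G₁ G₂)).Adj x y
  · exact Or.inl ⟨h, (dist_eq_one_iff_adj).mpr h⟩
  · right
    refine ⟨h, ?_⟩
    obtain ⟨z, h1, h2⟩ := myc_join_common_nbr G₁ G₂ x y hne h
    have hle : (mycielskian (joinGraph G₁ G₂)).dist x y ≤ 2 := by
      have := dist_le (Walk.cons h1 (Walk.cons h2 Walk.nil))
      simpa using this
    have hpos : 0 < (mycielskian (joinGraph G₁ G₂)).dist x y :=
      Reachable.pos_dist_of_ne ⟨Walk.cons h1 (Walk.cons h2 Walk.nil)⟩ hne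
    have hne1 : (mycielskian (joinGraph G₁ G₂)).dist x y ≠ 1 := by
      rw [Ne, dist_eq_one_iff_adj]; exact h
    omega

lemma exists_nonadj (hd₁ : 2 ≤ G₁.diam) : ∃ a b : V₁, a ≠ b ∧ ¬ G₁.Adj a b := by
  have hnt : Nontrivial V₁ := G₁.nontrivial_of_diam_ne_zero (by omega)
  obtain ⟨u, v, huv⟩ := G₁.exists_dist_eq_diam
  refine ⟨u, v, ?_, ?_⟩
  · rintro rfl; rw [SimpleGraph.dist_self] at huv; omega
  · intro h
    rw [← dist_eq_one_iff_adj] at h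
    omega

lemma myc_join_diam [Nonempty V₂] (hc₁ : G₁.Connected) (hd₁ : 2 ≤ G₁.diam) :
    (mycielskian (joinGraph G₁ G₂)).diam = 2 := by
  have : Nonempty V₁ := hc₁.nonempty
  obtain ⟨a, b, hab, hnadj⟩ := exists_nonadj G₁ hd₁
  have hediam : (mycielskian (joinGraph G₁ G₂)).ediam ≤ 2 :=
    ediam_le_of_edist_le fun u v => myc_join_dist_le_two G₁ G₂ u v
  have hnadj' : ¬ (mycielskian (joinGraph G₁ G₂)).Adj (.inl (.inl a)) (.inl (.inl b)) := by
    rw [myc_adj_ll, join_adj_ll]; exact hnadj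
  have hne' : (Sum.inl (Sum.inl a) : (V₁ ⊕ V₂) ⊕ (V₁ ⊕ V₂) ⊕ Unit) ≠ .inl (.inl b) := by
    simp [hab]
  have hd2 : (mycielskian (joinGraph G₁ G₂)).dist (.inl (.inl a)) (.inl (.inl b)) = 2 := by
    rcases myc_join_dist_cases G₁ G₂ _ _ hne' with ⟨h, _⟩ | ⟨_, h⟩
    · exact absurd h hnadj'
    · exact h
  refine le_antisymm ?_ ?_
  · have := ENat.toNat_le_toNat hediam (by simp)
    simpa [SimpleGraph.diam] using this
  · rw [← hd2]
    exact dist_le_diam (fun htop => by rw [htop] at hediam; exact absurd hediam (by simp))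

lemma two_mul_natcard_edgeSet {α : Type*} [Fintype α] (G : SimpleGraph α)
    [DecidableRel G.Adj] :
    2 * Nat.card G.edgeSet = ∑ x : α, ∑ y : α, if G.Adj x y then 1 else 0 := by
  classical
  rw [Nat.card_eq_fintype_card, ← SimpleGraph.edgeFinset_card,
    SimpleGraph.two_mul_card_edgeFinset, Finset.card_filter, Fintype.sum_prod_type]

lemma distCount_one {α : Type*} (G : SimpleGraph α) :
    distCount G 1 = Nat.card G.edgeSet := by
  apply Nat.card_congr
  apply Equiv.subtypeEquivRight
  intro e
  induction e with
  | _ x y =>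
    simp only [Sym2.lift_mk, SimpleGraph.mem_edgeSet, Sym2.mk_isDiag_iff]
    constructor
    · rintro ⟨_, h2⟩; exact dist_eq_one_iff_adj.mp h2
    · intro h; exact ⟨h.ne, dist_eq_one_iff_adj.mpr h⟩

lemma join_adj_rl (a : V₂) (b : V₁) : (joinGraph G₁ G₂).Adj (.inr a) (.inl b) :=
  (join_adj_lr _ _ _ _).symm

lemma myc_adj_ul (a b : V) : (mycielskian G).Adj (.inr (.inl a)) (.inl b) ↔ G.Adj a b := by
  rw [adj_comm, myc_adj_lu, adj_comm]

lemma myc_adj_wu (a : V) (u : Unit) : (mycielskian G).Adj (.inr (.inr u)) (.inr (.inl a)) :=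
  (myc_adj_uw _ _ _).symm

lemma myc_adj_wl (a : V) (u : Unit) : ¬ (mycielskian G).Adj (.inr (.inr u)) (.inl a) :=
  fun h => myc_adj_lw G a u h.symm

lemma myc_adj_ww (u u' : Unit) : ¬ (mycielskian G).Adj (.inr (.inr u)) (.inr (.inr u')) := by
  rintro ⟨h1, h2 | h2⟩ <;> simp_all

lemma join_sum [Fintype V₁] [Fintype V₂] [DecidableRel G₁.Adj] [DecidableRel G₂.Adj]
    [DecidableRel (joinGraph G₁ G₂).Adj] :
    (∑ x : V₁ ⊕ V₂, ∑ y : V₁ ⊕ V₂, if (joinGraph G₁ G₂).Adj x y then 1 else 0)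
    = (∑ x : V₁, ∑ y : V₁, if G₁.Adj x y then (1:ℕ) else 0)
      + (∑ x : V₂, ∑ y : V₂, if G₂.Adj x y then 1 else 0)
      + 2 * (Fintype.card V₁ * Fintype.card V₂) := by
  simp only [Fintype.sum_sum_type]
  simp [join_adj_ll, join_adj_rr, join_adj_lr, join_adj_rl, Finset.sum_add_distrib]
  ring

lemma myc_sum {α : Type*} (G : SimpleGraph α) [Fintype α] [DecidableRel G.Adj]
    [DecidableRel (mycielskian G).Adj] :
    (∑ x : α ⊕ α ⊕ Unit, ∑ y : α ⊕ α ⊕ Unit, if (mycielskian G).Adj x y then 1 else 0)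
    = 3 * (∑ x : α, ∑ y : α, if G.Adj x y then 1 else 0) + 2 * Fintype.card α := by
  simp only [Fintype.sum_sum_type]
  simp [myc_adj_ll, myc_adj_lu, myc_adj_ul, myc_adj_uu, myc_adj_uw,
    myc_adj_lw, myc_adj_wl, myc_adj_wu, myc_adj_ww, Finset.sum_add_distrib]
  ring

lemma distCount_partition {α : Type*} [Fintype α] (G : SimpleGraph α)
    (h : ∀ x y : α, x ≠ y → G.dist x y = 1 ∨ G.dist x y = 2) :
    distCount G 1 + distCount G 2 = (Fintype.card α).choose 2 := by
  classical
  unfold distCount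
  rw [Nat.card_eq_fintype_card, Nat.card_eq_fintype_card,
    Fintype.card_subtype, Fintype.card_subtype, ← Sym2.card_subtype_not_diag,
    Fintype.card_subtype]
  rw [← Finset.card_union_of_disjoint (by
    rw [Finset.disjoint_filter]
    rintro e _ ⟨h1, h2⟩ ⟨h3, h4⟩
    rw [h2] at h4
    norm_num at h4)]
  congr 1
  ext e
  simp only [Finset.mem_union, Finset.mem_filter, Finset.mem_univ, true_and]
  induction e with
  | _ x y =>
    simp only [Sym2.lift_mk, Sym2.mk_isDiag_iff]
    constructor
    · rintro (⟨h1, _⟩ | ⟨h1, _⟩) <;> exact h1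
    · intro hne
      rcases h x y hne with h2 | h2
      · exact Or.inl ⟨hne, h2⟩
      · exact Or.inr ⟨hne, h2⟩


end AuxSG

/-- For connected graphs `G₁` (with `n₁` vertices, `m₁` edges) and `G₂`
(with `n₂` vertices, `m₂` edges), each of diameter at least 2,
`H(μ(G₁ ⊕ G₂), x) = (3m₁+3m₂+3n₁n₂+n₁+n₂)x + (2n₁²+2n₂²+n₁n₂-3m₁-3m₂)x²`. -/
theorem stmt_4 {V₁ V₂ : Type*} [Fintype V₁] [Fintype V₂]
    (G₁ : SimpleGraph V₁) (G₂ : SimpleGraph V₂) (n₁ n₂ m₁ m₂ : ℕ)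
    (hn₁ : Fintype.card V₁ = n₁) (hn₂ : Fintype.card V₂ = n₂)
    (hm₁ : Nat.card G₁.edgeSet = m₁) (hm₂ : Nat.card G₂.edgeSet = m₂)
    (hc₁ : G₁.Connected) (hc₂ : G₂.Connected)
    (hd₁ : 2 ≤ G₁.diam) (hd₂ : 2 ≤ G₂.diam) :
    hosoya (mycielskian (joinGraph G₁ G₂)) =
      Polynomial.C ((3 * m₁ + 3 * m₂ + 3 * (n₁ * n₂) + n₁ + n₂ : ℕ) : ℚ) * Polynomial.X +
        Polynomial.C (2 * (n₁ : ℚ) ^ 2 + 2 * (n₂ : ℚ) ^ 2 + n₁ * n₂ - 3 * m₁ - 3 * m₂) *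
          Polynomial.X ^ 2 := by
  classical
  haveI : Nonempty V₁ := hc₁.nonempty
  haveI : Nonempty V₂ := hc₂.nonempty
  have hm₁' : (∑ x : V₁, ∑ y : V₁, if G₁.Adj x y then 1 else 0) = 2 * m₁ := by
    rw [← two_mul_natcard_edgeSet, hm₁]
  have hm₂' : (∑ x : V₂, ∑ y : V₂, if G₂.Adj x y then 1 else 0) = 2 * m₂ := by
    rw [← two_mul_natcard_edgeSet, hm₂]
  have hJ : 2 * Nat.card (joinGraph G₁ G₂).edgeSet = 2 * m₁ + 2 * m₂ + 2 * (n₁ * n₂) := by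
    rw [two_mul_natcard_edgeSet, join_sum, hm₁', hm₂', hn₁, hn₂]
  have hMJ : 2 * Nat.card (mycielskian (joinGraph G₁ G₂)).edgeSet
      = 3 * (2 * Nat.card (joinGraph G₁ G₂).edgeSet) + 2 * (n₁ + n₂) := by
    rw [two_mul_natcard_edgeSet, myc_sum, two_mul_natcard_edgeSet, Fintype.card_sum, hn₁, hn₂]
  have hd1 : distCount (mycielskian (joinGraph G₁ G₂)) 1
      = 3 * m₁ + 3 * m₂ + 3 * (n₁ * n₂) + n₁ + n₂ := by
    rw [distCount_one]; omega
  have hcard : Fintype.card ((V₁ ⊕ V₂) ⊕ (V₁ ⊕ V₂) ⊕ Unit) = 2 * (n₁ + n₂) + 1 := by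
    simp [Fintype.card_sum, hn₁, hn₂]
    ring
  have hpart : distCount (mycielskian (joinGraph G₁ G₂)) 1
      + distCount (mycielskian (joinGraph G₁ G₂)) 2 = (2 * (n₁ + n₂) + 1).choose 2 := by
    rw [distCount_partition _ (fun x y hne =>
      (myc_join_dist_cases G₁ G₂ x y hne).imp (·.2) (·.2))]
    rw [hcard]
  have hchoose : (2 * (n₁ + n₂) + 1).choose 2 = (n₁ + n₂) * (2 * (n₁ + n₂) + 1) := by
    rw [Nat.choose_two_right,
      show (2 * (n₁ + n₂) + 1) - 1 = 2 * (n₁ + n₂) from rfl,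
      show (2 * (n₁ + n₂) + 1) * (2 * (n₁ + n₂)) = ((n₁ + n₂) * (2 * (n₁ + n₂) + 1)) * 2 by ring,
      Nat.mul_div_cancel _ (by norm_num)]
  have hd2 : distCount (mycielskian (joinGraph G₁ G₂)) 2
      + (3 * m₁ + 3 * m₂ + 3 * (n₁ * n₂) + n₁ + n₂) = (n₁ + n₂) * (2 * (n₁ + n₂) + 1) := by
    omega
  have hd2q : (distCount (mycielskian (joinGraph G₁ G₂)) 2 : ℚ)
      = 2 * (n₁ : ℚ) ^ 2 + 2 * (n₂ : ℚ) ^ 2 + n₁ * n₂ - 3 * m₁ - 3 * m₂ := by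
    have := congrArg (Nat.cast : ℕ → ℚ) hd2
    push_cast at this
    linarith
  rw [hosoya, myc_join_diam G₁ G₂ hc₁ hd₁]
  rw [show Finset.Icc 1 2 = ({1, 2} : Finset ℕ) from rfl]
  rw [Finset.sum_insert (by norm_num), Finset.sum_singleton]
  rw [hd1, hd2q, Polynomial.smul_eq_C_mul, Polynomial.smul_eq_C_mul, pow_one]
end

section
/- For every integer n ≥ 2, the Hosoya polynomial of the Mycielskian of the star S_n is H(μ(S_n), x) = (4n+1)x + (2n² + n + 2)x². -/
open SimpleGraph Polynomial Finset

/-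
If a graph has diameter 2, its Hosoya polynomial is `m x + (C(N,2) - m) x²`, where `N`
and `m` count vertices and edges. The star has diameter at most 2 and no isolated vertices, and
the Mycielskian keeps both properties: a pair of non-adjacent vertices of `μ(G)` finds a common
neighbour among the copies of common neighbours or of neighbours in `G`, or at the apex. Since
`v` and its shadow `u_v` are never adjacent but share the neighbours of `v`, the diameter is
exactly 2. Summing degrees gives `|E(μ(G))| = 3|E(G)| + |V(G)|`, so `μ(S_n)` has `4n + 1` edges
on `2n + 3` vertices.
-/

variable {V : Type*} {G : SimpleGraph V}

lemma degree_eq_sum_ite [Fintype V] [DecidableRel G.Adj] (v : V) :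
    G.degree v = ∑ w, if G.Adj v w then 1 else 0 := by
  rw [← card_neighborFinset_eq_degree, neighborFinset_eq_filter, Finset.card_filter]

lemma ediam_le_two_iff :
    G.ediam ≤ 2 ↔ ∀ u v, u ≠ v → ¬G.Adj u v → (G.commonNeighbors u v).Nonempty := by
  rw [ediam_le_iff]
  refine forall₂_congr fun u v => ?_
  rw [← not_lt, two_lt_edist_iff, Set.nonempty_iff_ne_empty]
  tauto

lemma ediam_starGraph_le_two (r : V) : (SimpleGraph.starGraph r).ediam ≤ 2 :=
  calc _ ≤ 2 * (SimpleGraph.starGraph r).eccent r := ediam_le_two_mul_eccent r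
    _ ≤ 2 * 1 := by
      gcongr
      exact (eccent_le_one_iff r).2 fun _ h => isUniversal_starGraph_self h
    _ = 2 := mul_one 2

lemma distCount_one_s5 : distCount G 1 = G.edgeSet.ncard := by
  refine Nat.card_congr (Equiv.subtypeEquivRight fun e => ?_)
  induction e using Sym2.ind with
  | _ u v => simpa using fun h => h.ne

lemma distCount_one_add_distCount_two [Finite V] (h : G.ediam ≤ 2) :
    distCount G 1 + distCount G 2 = (Nat.card V).choose 2 := by
  classical
  have dist_one_or_two (u v : V) (huv : u ≠ v) : G.dist u v = 1 ∨ G.dist u v = 2 := by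
    by_cases hadj : G.Adj u v
    · exact .inl (dist_eq_one_iff_adj.2 hadj)
    · have h2 : G.edist u v = 2 :=
        edist_eq_two_iff.2 ⟨huv, hadj, ediam_le_two_iff.1 h u v huv hadj⟩
      exact .inr (by rw [SimpleGraph.dist, h2]; rfl)
  rw [distCount, distCount, ← Nat.card_sum, ← Nat.card_congr (subtypeOrEquiv _ _ ?disj),
    ← Sym2.natCard_subtype_not_diag]
  case disj =>
    rw [Pi.disjoint_iff]
    intro e
    simp only [Prop.disjoint_iff]
    omega
  refine Nat.card_congr (Equiv.subtypeEquivRight fun e => ?_)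
  induction e using Sym2.ind with
  | _ u v =>
    simp only [Sym2.lift_mk, Sym2.mk_isDiag_iff]
    have := dist_one_or_two u v
    tauto

lemma hosoya_eq_of_diam_eq_two (h : G.diam = 2) :
    hosoya G = C (distCount G 1 : ℚ) * X + C (distCount G 2 : ℚ) * X ^ 2 := by
  rw [hosoya, h, show Finset.Icc 1 2 = {1, 2} from rfl, Finset.sum_pair (by norm_num),
    smul_eq_C_mul, smul_eq_C_mul, pow_one]

@[simp] lemma mycielskian_adj_inl_inl {a b : V} :
    (mycielskian G).Adj (.inl a) (.inl b) ↔ G.Adj a b := by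
  simp only [mycielskian, fromRel_adj]
  exact ⟨fun h => h.2.elim id (·.symm), fun h => ⟨by simpa using h.ne, .inl h⟩⟩

@[simp] lemma mycielskian_adj_inl_inr_inl {a b : V} :
    (mycielskian G).Adj (.inl a) (.inr (.inl b)) ↔ G.Adj a b := by
  simp [mycielskian, fromRel_adj]

@[simp] lemma mycielskian_adj_inr_inl_inl {a b : V} :
    (mycielskian G).Adj (.inr (.inl a)) (.inl b) ↔ G.Adj a b := by
  rw [adj_comm, mycielskian_adj_inl_inr_inl, G.adj_comm]

@[simp] lemma mycielskian_adj_inr_inl_inr_inr {a : V} {t : Unit} :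
    (mycielskian G).Adj (.inr (.inl a)) (.inr (.inr t)) := by
  simp [mycielskian, fromRel_adj]

@[simp] lemma mycielskian_adj_inr_inr_inr_inl {a : V} {t : Unit} :
    (mycielskian G).Adj (.inr (.inr t)) (.inr (.inl a)) :=
  mycielskian_adj_inr_inl_inr_inr.symm

@[simp] lemma mycielskian_not_adj_inl_inr_inr {a : V} {t : Unit} :
    ¬(mycielskian G).Adj (.inl a) (.inr (.inr t)) := by
  simp [mycielskian, fromRel_adj]

@[simp] lemma mycielskian_not_adj_inr_inr_inl {a : V} {t : Unit} :
    ¬(mycielskian G).Adj (.inr (.inr t)) (.inl a) := by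
  simp [mycielskian, fromRel_adj]

@[simp] lemma mycielskian_not_adj_inr_inl_inr_inl {a b : V} :
    ¬(mycielskian G).Adj (.inr (.inl a)) (.inr (.inl b)) := by
  simp [mycielskian, fromRel_adj]

@[simp] lemma mycielskian_not_adj_inr_inr_inr_inr {s t : Unit} :
    ¬(mycielskian G).Adj (.inr (.inr s)) (.inr (.inr t)) := by
  simp [mycielskian]

section Degree

variable [Fintype V] [DecidableRel (mycielskian G).Adj]

lemma mycielskian_degree_inl [DecidableRel G.Adj] (v : V) :
    (mycielskian G).degree (.inl v) = 2 * G.degree v := by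
  rw [degree_eq_sum_ite, degree_eq_sum_ite, Fintype.sum_sum_type, Fintype.sum_sum_type]
  simp only [mycielskian_adj_inl_inl, mycielskian_adj_inl_inr_inl,
    mycielskian_not_adj_inl_inr_inr, if_false, Finset.sum_const_zero, add_zero, two_mul]

lemma mycielskian_degree_inr_inl [DecidableRel G.Adj] (v : V) :
    (mycielskian G).degree (.inr (.inl v)) = G.degree v + 1 := by
  rw [degree_eq_sum_ite, degree_eq_sum_ite, Fintype.sum_sum_type, Fintype.sum_sum_type]
  simp only [mycielskian_adj_inr_inl_inl, mycielskian_not_adj_inr_inl_inr_inl,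
    mycielskian_adj_inr_inl_inr_inr, if_false, if_true, Finset.sum_const_zero, zero_add]
  rfl

lemma mycielskian_degree_inr_inr (t : Unit) :
    (mycielskian G).degree (.inr (.inr t)) = Fintype.card V := by
  rw [degree_eq_sum_ite, Fintype.sum_sum_type, Fintype.sum_sum_type]
  simp

lemma card_edgeFinset_mycielskian [DecidableRel G.Adj] :
    #(mycielskian G).edgeFinset = 3 * #G.edgeFinset + Fintype.card V := by
  have hμ := (mycielskian G).sum_degrees_eq_twice_card_edges
  have hG := G.sum_degrees_eq_twice_card_edges
  simp only [Fintype.sum_sum_type, mycielskian_degree_inl, mycielskian_degree_inr_inl,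
    mycielskian_degree_inr_inr, Finset.sum_add_distrib, ← Finset.mul_sum, Finset.sum_const,
    Finset.card_univ, smul_eq_mul, mul_one, Fintype.card_unit] at hμ
  omega

end Degree

lemma ediam_mycielskian_le_two (hG : G.ediam ≤ 2) (hiso : ∀ v, ¬G.IsIsolated v) :
    (mycielskian G).ediam ≤ 2 := by
  rw [ediam_le_two_iff] at hG ⊢
  have neighbor (a : V) : ∃ c, G.Adj a c := exists_adj_iff_not_isIsolated.2 (hiso a)
  have from_inl (a : V) (y) (hne : .inl a ≠ y) (hnadj : ¬(mycielskian G).Adj (.inl a) y) :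
      ((mycielskian G).commonNeighbors (.inl a) y).Nonempty := by
    simp only [Set.Nonempty, mem_commonNeighbors]
    rcases y with b | b | t
    · obtain ⟨c, hac, hbc⟩ := hG a b (by simpa using hne) (by simpa using hnadj)
      exact ⟨.inl c, by simpa using hac, by simpa using hbc⟩
    · rcases eq_or_ne a b with rfl | hab
      · obtain ⟨c, hc⟩ := neighbor a
        exact ⟨.inl c, by simpa using hc, by simpa using hc⟩
      · obtain ⟨c, hac, hbc⟩ := hG a b hab (by simpa using hnadj)
        exact ⟨.inl c, by simpa using hac, by simpa using hbc⟩
    · obtain ⟨c, hc⟩ := neighbor a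
      exact ⟨.inr (.inl c), by simpa using hc, by simp⟩
  rintro (a | a | s) y hne hnadj
  · exact from_inl a y hne hnadj
  · rcases y with b | b | t
    · rw [commonNeighbors_symm]
      exact from_inl b _ hne.symm (by rwa [adj_comm])
    · exact ⟨.inr (.inr ()), by simp [mem_commonNeighbors]⟩
    · simp at hnadj
  · rcases y with b | b | t
    · rw [commonNeighbors_symm]
      exact from_inl b _ hne.symm (by rwa [adj_comm])
    · simp at hnadj
    · simp at hne

lemma ediam_mycielskian_eq_two [Nonempty V] (hG : G.ediam ≤ 2) (hiso : ∀ v, ¬G.IsIsolated v) :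
    (mycielskian G).ediam = 2 := by
  refine (ediam_mycielskian_le_two hG hiso).antisymm ?_
  obtain ⟨v⟩ := ‹Nonempty V›
  obtain ⟨w, hvw⟩ := exists_adj_iff_not_isIsolated.2 (hiso v)
  calc (2 : ℕ∞) = (mycielskian G).edist (.inl v) (.inr (.inl v)) := by
        refine (edist_eq_two_iff.2 ⟨by simp, by simp, .inl w, ?_⟩).symm
        simp [mem_commonNeighbors, hvw]
    _ ≤ (mycielskian G).ediam := edist_le_ediam

/-- For `n ≥ 2`, `H(μ(S_n), x) = (4n+1)x + (2n²+n+2)x²`. -/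
theorem stmt_5 (n : ℕ) (hn : 2 ≤ n) :
    hosoya (mycielskian (_root_.starGraph n)) =
      Polynomial.C ((4 * n + 1 : ℕ) : ℚ) * Polynomial.X +
        Polynomial.C ((2 * n ^ 2 + n + 2 : ℕ) : ℚ) * Polynomial.X ^ 2 := by
  classical
  set S := SimpleGraph.starGraph (0 : Fin (n + 1))
  change hosoya (mycielskian S) = _
  have : Nontrivial (Fin (n + 1)) := Fin.nontrivial_iff_two_le.2 (by omega)
  have hiso : ∀ v, ¬S.IsIsolated v := isUniversal_starGraph_self.not_isIsolated
  have hdiam : (mycielskian S).diam = 2 := by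
    rw [SimpleGraph.diam, ediam_mycielskian_eq_two (ediam_starGraph_le_two 0) hiso]
    rfl
  have hd1 : distCount (mycielskian S) 1 = 4 * n + 1 := by
    have hS : #S.edgeFinset + 1 = Fintype.card (Fin (n + 1)) := (isTree_starGraph 0).card_edgeFinset
    rw [distCount_one_s5, ← coe_edgeFinset, Set.ncard_coe_finset, card_edgeFinset_mycielskian]
    simp only [Fintype.card_fin] at hS ⊢
    omega
  have hd2 : (distCount (mycielskian S) 2 : ℚ) = 2 * n ^ 2 + n + 2 := by
    have hsum := distCount_one_add_distCount_two
      (ediam_mycielskian_le_two (ediam_starGraph_le_two 0) hiso)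
    rw [hd1, Nat.card_eq_fintype_card] at hsum
    have := congrArg (Nat.cast (R := ℚ)) hsum
    push_cast [Nat.cast_choose_two, Fintype.card_sum, Fintype.card_fin, Fintype.card_unit] at this
    linarith
  rw [hosoya_eq_of_diam_eq_two hdiam, hd1, hd2]
  push_cast
  rfl
end

section
/- Let G be a simple connected graph with n ≥ 2 vertices and m edges, and write a_k = d(G,k). Then the Hyper-Wiener index of the Mycielskian of G is WW(μ(G)) = (1/2)(25n² − 11n) − 19m − 13a_2 − 4a_3. -/
open SimpleGraph Polynomial Finset

/-! In `μ(G)` the apex `w` is adjacent to every shadow vertex `u_i` and at distance `2` from every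
`v_i`. A walk between non-apex vertices either passes through `w`, and then has length at least
`d(x, w) + d(w, y)`, or avoids `w` and folds (`u_i ↦ v_i`) onto a walk of `G` of the same length.
Hence `d(v_i, v_j) = min (d_G(i, j)) 4`, `d(u_i, v_j) = min (d_G(i, j)) 3` for `i ≠ j`, and
`d(u_i, v_i) = d(u_i, u_j) = 2`. Summing `d² + d` over the four pairs lying over `(i, j)` gives
`50 - 38 [i = j] - 38 [d = 1] - 26 [d = 2] - 8 [d = 3]`, the apex contributes `16` for each `i`,
and the ordered pairs at distance `k` in `G` number `2 d(G, k)`. -/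

local notation "apex" => Sum.inr (Sum.inr ())

lemma Fintype.double_sum_sum_sum_unit {V M : Type*} [AddCommMonoid M] [Fintype V]
    (F : V ⊕ V ⊕ Unit → V ⊕ V ⊕ Unit → M) :
    ∑ x, ∑ y, F x y =
      ∑ i, ∑ j, (F (Sum.inl i) (Sum.inl j) + F (Sum.inl i) (Sum.inr (Sum.inl j))
        + F (Sum.inr (Sum.inl i)) (Sum.inl j) + F (Sum.inr (Sum.inl i)) (Sum.inr (Sum.inl j)))
      + ∑ i, (F (Sum.inl i) apex + F apex (Sum.inl i)
        + F (Sum.inr (Sum.inl i)) apex + F apex (Sum.inr (Sum.inl i)))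
      + F apex apex := by
  simp only [Fintype.sum_sum_type, Fintype.sum_unique, Finset.sum_add_distrib]
  abel

namespace SimpleGraph

variable {V : Type*} {G : SimpleGraph V}

lemma dist_eq_two_of_adj_of_adj {x y z : V} (hxz : x ≠ z) (hnadj : ¬ G.Adj x z)
    (hxy : G.Adj x y) (hyz : G.Adj y z) : G.dist x z = 2 :=
  le_antisymm (dist_le (.cons hxy hyz.toWalk))
    (Reachable.one_lt_dist_of_ne_of_not_adj ⟨.cons hxy hyz.toWalk⟩ hxz hnadj)

lemma Walk.dist_add_dist_le_length [DecidableEq V] {u v w : V} (p : G.Walk u v)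
    (hw : w ∈ p.support) :
    G.dist u w + G.dist w v ≤ p.length :=
  calc G.dist u w + G.dist w v ≤ (p.takeUntil w hw).length + (p.dropUntil w hw).length :=
        add_le_add (dist_le _) (dist_le _)
    _ = p.length := by rw [← Walk.length_append, p.take_spec hw]

lemma Reachable.exists_adj_of_ne {u v : V} (h : G.Reachable u v) (hne : u ≠ v) :
    ∃ w, G.Adj u w :=
  let ⟨p⟩ := h
  ⟨_, p.adj_snd (p.not_nil_of_ne hne)⟩

def distGraph (G : SimpleGraph V) (k : ℕ) : SimpleGraph V where
  Adj u v := u ≠ v ∧ G.dist u v = k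
  symm := ⟨fun _ _ h => ⟨h.1.symm, G.dist_comm ▸ h.2⟩⟩
  loopless := ⟨fun _ h => h.1 rfl⟩

@[simp]
lemma distGraph_adj {k : ℕ} {u v : V} : (G.distGraph k).Adj u v ↔ u ≠ v ∧ G.dist u v = k :=
  Iff.rfl

lemma sum_sum_ite_adj_eq_two_mul_card_edgeSet [Fintype V] [DecidableRel G.Adj] :
    ∑ u, ∑ v, (if G.Adj u v then (1 : ℚ) else 0) = 2 * Nat.card G.edgeSet := by
  classical
  simp only [Finset.sum_boole, ← neighborFinset_eq_filter, card_neighborFinset_eq_degree]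
  rw [← Nat.cast_sum, sum_degrees_eq_twice_card_edges, Nat.card_eq_fintype_card,
    ← edgeFinset_card]
  push_cast
  rfl

lemma distCount_eq_card_edgeSet_distGraph (k : ℕ) :
    distCount G k = Nat.card (G.distGraph k).edgeSet :=
  Nat.card_congr <| Equiv.subtypeEquivRight fun e => by
    induction e using Sym2.ind
    simp

noncomputable instance [DecidableEq V] {k : ℕ} : DecidableRel (G.distGraph k).Adj :=
  fun u v => inferInstanceAs (Decidable (u ≠ v ∧ G.dist u v = k))

noncomputable def hyperWienerTerm (G : SimpleGraph V) (x y : V) : ℚ :=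
  (G.dist x y : ℚ) ^ 2 + G.dist x y

lemma hyperWiener_eq_sum_hyperWienerTerm [Fintype V] (G : SimpleGraph V) :
    hyperWiener G = (∑ x, ∑ y, G.hyperWienerTerm x y) / 4 :=
  rfl

@[simp]
lemma mycielskian_adj_inl_inl {i j : V} :
    (mycielskian G).Adj (Sum.inl i) (Sum.inl j) ↔ G.Adj i j := by
  simpa [mycielskian, G.adj_comm j i] using fun h : G.Adj i j => h.ne

@[simp]
lemma mycielskian_adj_inl_inr_inl {i j : V} :
    (mycielskian G).Adj (Sum.inl i) (Sum.inr (Sum.inl j)) ↔ G.Adj i j := by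
  simp [mycielskian]

@[simp]
lemma mycielskian_adj_inr_inl_inl {i j : V} :
    (mycielskian G).Adj (Sum.inr (Sum.inl i)) (Sum.inl j) ↔ G.Adj i j := by
  rw [adj_comm, mycielskian_adj_inl_inr_inl, G.adj_comm]

@[simp]
lemma mycielskian_adj_inr_inl_apex {i : V} : (mycielskian G).Adj (Sum.inr (Sum.inl i)) apex := by
  simp [mycielskian]

@[simp]
lemma mycielskian_not_adj_inl_apex {i : V} : ¬ (mycielskian G).Adj (Sum.inl i) apex := by
  simp [mycielskian]

@[simp]
lemma mycielskian_not_adj_inr_inl_inr_inl {i j : V} :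
    ¬ (mycielskian G).Adj (Sum.inr (Sum.inl i)) (Sum.inr (Sum.inl j)) := by
  simp [mycielskian]

def mycielskianFold (d : V) : V ⊕ V ⊕ Unit → V :=
  Sum.elim id (Sum.elim id fun _ => d)

lemma mycielskianFold_adj_of_adj {x y : V ⊕ V ⊕ Unit} (h : (mycielskian G).Adj x y)
    (hx : x ≠ apex) (hy : y ≠ apex) (d : V) :
    G.Adj (mycielskianFold d x) (mycielskianFold d y) := by
  rcases x with a | a | ⟨⟩ <;> rcases y with b | b | ⟨⟩ <;>
    simp_all [mycielskianFold]

lemma dist_mycielskianFold_le_length (d : V) {x y : V ⊕ V ⊕ Unit}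
    (p : (mycielskian G).Walk x y) (hp : apex ∉ p.support) :
    G.dist (mycielskianFold d x) (mycielskianFold d y) ≤ p.length := by
  induction p with
  | nil => simp
  | @cons a b c h p ih =>
    rw [Walk.support_cons, List.mem_cons, not_or] at hp
    have hab := mycielskianFold_adj_of_adj h (Ne.symm hp.1)
      (fun hb => hp.2 (hb ▸ p.start_mem_support)) d
    calc G.dist (mycielskianFold d a) (mycielskianFold d c)
        ≤ G.dist (mycielskianFold d a) (mycielskianFold d b)
          + G.dist (mycielskianFold d b) (mycielskianFold d c) :=
          hab.reachable.dist_triangle_left _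
      _ ≤ 1 + p.length := by
          rw [dist_eq_one_iff_adj.mpr hab]; exact Nat.add_le_add_left (ih hp.2) 1
      _ = (Walk.cons h p).length := by rw [Walk.length_cons, add_comm]

lemma min_dist_mycielskianFold_le_dist (d : V) {x y : V ⊕ V ⊕ Unit}
    (hxy : (mycielskian G).Reachable x y) :
    min (G.dist (mycielskianFold d x) (mycielskianFold d y))
      ((mycielskian G).dist x apex + (mycielskian G).dist apex y) ≤ (mycielskian G).dist x y := by
  classical
  obtain ⟨p, hp⟩ := hxy.exists_walk_length_eq_dist
  rw [← hp]
  by_cases hw : apex ∈ p.support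
  · exact min_le_of_right_le (p.dist_add_dist_le_length hw)
  · exact min_le_of_left_le (dist_mycielskianFold_le_length d p hw)

def mycielskianInl : G →g mycielskian G :=
  ⟨Sum.inl, mycielskian_adj_inl_inl.mpr⟩

lemma Reachable.mycielskian_dist_inl_inl_le {i j : V} (h : G.Reachable i j) :
    (mycielskian G).dist (Sum.inl i) (Sum.inl j) ≤ G.dist i j := by
  obtain ⟨p, hp⟩ := h.exists_walk_length_eq_dist
  exact (dist_le (p.map mycielskianInl)).trans_eq (by rw [Walk.length_map, hp])

lemma Reachable.mycielskian_dist_inr_inl_inl_le {i j : V} (h : G.Reachable i j) (hij : i ≠ j) :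
    (mycielskian G).dist (Sum.inr (Sum.inl i)) (Sum.inl j) ≤ G.dist i j := by
  obtain ⟨p, hp⟩ := h.exists_walk_length_eq_dist
  cases p with
  | nil => exact absurd rfl hij
  | cons hik q =>
    rw [← hp]
    exact (dist_le (.cons (mycielskian_adj_inr_inl_inl.mpr hik) (q.map mycielskianInl))).trans_eq
      (congrArg (· + 1) (q.length_map _))

@[simp]
lemma mycielskian_dist_apex_inr_inl (i : V) :
    (mycielskian G).dist apex (Sum.inr (Sum.inl i)) = 1 :=
  dist_eq_one_iff_adj.mpr mycielskian_adj_inr_inl_apex.symm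

lemma mycielskian_dist_apex_inl {i k : V} (hik : G.Adj i k) :
    (mycielskian G).dist apex (Sum.inl i) = 2 :=
  dist_eq_two_of_adj_of_adj (by simp) (fun h => mycielskian_not_adj_inl_apex h.symm)
    mycielskian_adj_inr_inl_apex.symm (mycielskian_adj_inr_inl_inl.mpr hik.symm)

lemma mycielskian_dist_inr_inl_inr_inl {i j : V} (hij : i ≠ j) :
    (mycielskian G).dist (Sum.inr (Sum.inl i)) (Sum.inr (Sum.inl j)) = 2 :=
  dist_eq_two_of_adj_of_adj (by simpa using hij) mycielskian_not_adj_inr_inl_inr_inl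
    mycielskian_adj_inr_inl_apex mycielskian_adj_inr_inl_apex.symm

lemma mycielskian_dist_inr_inl_inl_self {i k : V} (hik : G.Adj i k) :
    (mycielskian G).dist (Sum.inr (Sum.inl i)) (Sum.inl i) = 2 :=
  dist_eq_two_of_adj_of_adj (by simp) (by simp)
    (mycielskian_adj_inr_inl_inl.mpr hik) (mycielskian_adj_inl_inl.mpr hik.symm)

lemma Reachable.mycielskian_dist_inr_inl_inl {i j : V} (h : G.Reachable i j) (hij : i ≠ j) :
    (mycielskian G).dist (Sum.inr (Sum.inl i)) (Sum.inl j) = min (G.dist i j) 3 := by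
  obtain ⟨k, hjk⟩ := h.symm.exists_adj_of_ne hij.symm
  have hj := mycielskian_dist_apex_inl hjk
  have hi : (mycielskian G).dist (Sum.inr (Sum.inl i)) apex = 1 := by
    rw [dist_comm, mycielskian_dist_apex_inr_inl]
  have hi' : (mycielskian G).Reachable (Sum.inr (Sum.inl i)) apex :=
    mycielskian_adj_inr_inl_apex.reachable
  have hj' : (mycielskian G).Reachable apex (Sum.inl j) :=
    Reachable.of_dist_ne_zero (hj.trans_ne two_ne_zero)
  refine le_antisymm (le_min (h.mycielskian_dist_inr_inl_inl_le hij) ?_) ?_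
  · exact (hi'.dist_triangle_left _).trans_eq (by rw [hi, hj])
  · simpa [hi, hj, mycielskianFold] using min_dist_mycielskianFold_le_dist i (hi'.trans hj')

lemma Reachable.mycielskian_dist_inl_inl {i j : V} (h : G.Reachable i j) :
    (mycielskian G).dist (Sum.inl i) (Sum.inl j) = min (G.dist i j) 4 := by
  rcases eq_or_ne i j with rfl | hij
  · simp
  obtain ⟨k, hik⟩ := h.exists_adj_of_ne hij
  obtain ⟨l, hjl⟩ := h.symm.exists_adj_of_ne hij.symm
  have hj := mycielskian_dist_apex_inl hjl
  have hi : (mycielskian G).dist (Sum.inl i) apex = 2 := by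
    rw [dist_comm, mycielskian_dist_apex_inl hik]
  have hi' : (mycielskian G).Reachable (Sum.inl i) apex :=
    Reachable.of_dist_ne_zero (hi.trans_ne two_ne_zero)
  have hj' : (mycielskian G).Reachable apex (Sum.inl j) :=
    Reachable.of_dist_ne_zero (hj.trans_ne two_ne_zero)
  refine le_antisymm (le_min h.mycielskian_dist_inl_inl_le ?_) ?_
  · exact (hi'.dist_triangle_left _).trans_eq (by rw [hi, hj])
  · simpa [hi, hj, mycielskianFold] using min_dist_mycielskianFold_le_dist i (hi'.trans hj')

lemma Preconnected.mycielskian_hyperWienerTerm_block [Nontrivial V] [DecidableEq V]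
    [DecidableRel G.Adj] (hc : G.Preconnected) (i j : V) :
    (mycielskian G).hyperWienerTerm (Sum.inl i) (Sum.inl j)
      + (mycielskian G).hyperWienerTerm (Sum.inl i) (Sum.inr (Sum.inl j))
      + (mycielskian G).hyperWienerTerm (Sum.inr (Sum.inl i)) (Sum.inl j)
      + (mycielskian G).hyperWienerTerm (Sum.inr (Sum.inl i)) (Sum.inr (Sum.inl j))
      = 50 - 38 * (if i = j then 1 else 0) - 38 * (if G.Adj i j then 1 else 0)
        - 26 * (if (G.distGraph 2).Adj i j then 1 else 0)
        - 8 * (if (G.distGraph 3).Adj i j then 1 else 0) := by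
  rcases eq_or_ne i j with rfl | hij
  · obtain ⟨k, hik⟩ := hc.exists_adj_of_nontrivial i
    simp only [hyperWienerTerm, dist_comm (u := Sum.inl i),
      mycielskian_dist_inr_inl_inl_self hik]
    norm_num
  · have hd : 0 < G.dist i j := (hc i j).pos_dist_of_ne hij
    simp only [hyperWienerTerm, dist_comm (u := Sum.inl i) (v := Sum.inr (Sum.inl j)),
      (hc i j).mycielskian_dist_inl_inl, (hc j i).mycielskian_dist_inr_inl_inl hij.symm,
      (hc i j).mycielskian_dist_inr_inl_inl hij, mycielskian_dist_inr_inl_inr_inl hij,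
      dist_comm (u := j), ← dist_eq_one_iff_adj (G := G) (u := i), distGraph_adj, hij, ne_eq,
      not_false_eq_true, true_and, if_false]
    generalize G.dist i j = d at hd ⊢
    obtain rfl | rfl | rfl | hd4 : d = 1 ∨ d = 2 ∨ d = 3 ∨ 4 ≤ d := by omega
    · norm_num
    · norm_num
    · norm_num
    · rw [min_eq_right hd4, min_eq_right (by omega)]
      simp only [show d ≠ 1 by omega, show d ≠ 2 by omega, show d ≠ 3 by omega, if_false]
      norm_num

lemma Preconnected.mycielskian_hyperWienerTerm_apex [Nontrivial V] (hc : G.Preconnected) (i : V) :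
    (mycielskian G).hyperWienerTerm (Sum.inl i) apex
      + (mycielskian G).hyperWienerTerm apex (Sum.inl i)
      + (mycielskian G).hyperWienerTerm (Sum.inr (Sum.inl i)) apex
      + (mycielskian G).hyperWienerTerm apex (Sum.inr (Sum.inl i)) = 16 := by
  obtain ⟨k, hik⟩ := hc.exists_adj_of_nontrivial i
  simp only [hyperWienerTerm, dist_comm (v := apex), mycielskian_dist_apex_inl hik,
    mycielskian_dist_apex_inr_inl]
  norm_num

end SimpleGraph

/-- For a connected graph `G` with `n ≥ 2` vertices and `m` edges, with
`a_k = d(G,k)`, the Hyper-Wiener index of `μ(G)` is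
`(1/2)(25n² - 11n) - 19m - 13a₂ - 4a₃`. -/
theorem stmt_9 {V : Type*} [Fintype V] (G : SimpleGraph V) (n m : ℕ)
    (hn : Fintype.card V = n) (hn2 : 2 ≤ n) (hm : Nat.card G.edgeSet = m)
    (hc : G.Connected) :
    hyperWiener (mycielskian G) =
      (25 * (n : ℚ) ^ 2 - 11 * n) / 2 - 19 * m - 13 * distCount G 2 - 4 * distCount G 3 := by
  classical
  subst hn
  have : Nontrivial V := Fintype.one_lt_card_iff_nontrivial.mp hn2
  rw [hyperWiener_eq_sum_hyperWienerTerm, Fintype.double_sum_sum_sum_unit]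
  simp only [hc.preconnected.mycielskian_hyperWienerTerm_block,
    hc.preconnected.mycielskian_hyperWienerTerm_apex]
  rw [hyperWienerTerm, dist_self]
  simp only [Finset.sum_sub_distrib, ← Finset.mul_sum, sum_sum_ite_adj_eq_two_mul_card_edgeSet,
    Finset.sum_ite_eq, Finset.sum_const, Finset.card_univ, Finset.mem_univ, if_true, nsmul_eq_mul,
    ← distCount_eq_card_edgeSet_distGraph, hm]
  ring
end
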